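/- arXiv:2202.12445 — 4 statements merged into one kernel-verified Lean document; each statement's English description precedes it below -/
import Mathlib

section
/- Let L > 0 and suppose that almost surely |τ̂| ≤ L and |τ̂_k(X)| ≤ L for every k ∈ {1,…,K}, and that |Y₀|, |Y₁| ≤ L almost surely. Let τ̂₁,…,τ̂_K be fixed measurable candidate models, let (X_i, Y_i, Z_i), i = 1,…,m, be i.i.d. copies of (X, Y, Z), and let ŵ be any minimizer of the empirical stacking loss ℓ̂ over the simplex Δ_K. Then for every δ ∈ (0,1), with probability at least 1 − δ, the stacked model τ̂_s = Σ_k ŵ_k τ̂_k satisfies ‖τ̂_s − τ‖₂² ≤ min_{k ∈ [K]} ‖τ̂_k − τ‖₂² + 12 L² √(log(2(K+1)²/δ)/m). -/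
/-!
The pseudo-outcome is unbiased for the CATE given `X`: on `{Z = 1}` it equals a function `u` of
`(X, Y₀, Y₁)`, on `{Z = 0}` a function `v`, and `p u + (1 - p) v = Y₁ - Y₀`; since `Z` is
independent of `(X, Y₀, Y₁)`, `τ̂ - τ(X)` is orthogonal to every bounded function of `X`. Hence
for every stacked model `f_w = ∑ₖ wₖ τ̂ₖ` the stacking loss is `E[(τ̂ - τ(X))²] + ‖f_w - τ‖₂²`,
and comparing losses is comparing excess risks. The loss is the quadratic form
`w ↦ cᵀ G c` with `c = (1, -w)` and `G` the Gram matrix of `(τ̂, τ̂₁, …, τ̂_K)`, and the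
empirical loss is the same form in the sample Gram matrix. By Hoeffding's inequality and a union
bound over the `(K + 1)²` entries, all entries of the two Gram matrices are within
`ε = 2L²√(log(2(K+1)²/δ)/m)` with probability at least `1 - δ`. On that event the two quadratic
forms differ by at most `3ε` on the simplex, up to the common entry `G₀₀`, so the empirical
minimizer loses at most `6ε` against each vertex of the simplex.
-/

open MeasureTheory ProbabilityTheory Finset Filter Real

lemma abs_sum_mul_le_of_mem_stdSimplex {ι : Type*} [Fintype ι] {w : ι → ℝ}
    (hw : w ∈ stdSimplex ℝ ι) {a : ι → ℝ} {ε : ℝ} (ha : ∀ i, |a i| ≤ ε) :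
    |∑ i, w i * a i| ≤ ε :=
  calc |∑ i, w i * a i| ≤ ∑ i, w i * ε :=
        (abs_sum_le_sum_abs _ _).trans <| sum_le_sum fun i _ => by
          rw [abs_mul, abs_of_nonneg (hw.1 i)]
          exact mul_le_mul_of_nonneg_left (ha i) (hw.1 i)
    _ = ε := by rw [← sum_mul, hw.2, one_mul]

section StackingQuadForm

variable {K : ℕ}

/-- `cᵀ M c` for the coefficient vector `c = (1, -w)` of the residual `F₀ - ∑ₖ wₖ Fₖ₊₁`. -/
def stackingQuadForm (M : Fin (K + 1) → Fin (K + 1) → ℝ) (w : Fin K → ℝ) : ℝ :=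
  ∑ α, ∑ β, (Fin.cons 1 (-w) : Fin (K + 1) → ℝ) α * (Fin.cons 1 (-w) : Fin (K + 1) → ℝ) β * M α β

lemma stackingQuadForm_eq (M : Fin (K + 1) → Fin (K + 1) → ℝ) (w : Fin K → ℝ) :
    stackingQuadForm M w = M 0 0 - ∑ k, w k * (M 0 k.succ + M k.succ 0)
      + ∑ j, w j * ∑ k, w k * M j.succ k.succ := by
  simp only [stackingQuadForm, Fin.sum_univ_succ, Fin.cons_zero, Fin.cons_succ, Pi.neg_apply,
    mul_add, sum_add_distrib, mul_sum]
  simp only [one_mul, mul_one, neg_mul, mul_neg, neg_neg, sum_neg_distrib, mul_assoc]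
  ring

lemma stackingQuadForm_sub (M N : Fin (K + 1) → Fin (K + 1) → ℝ) (w : Fin K → ℝ) :
    stackingQuadForm (M - N) w = stackingQuadForm M w - stackingQuadForm N w := by
  simp only [stackingQuadForm, Pi.sub_apply, mul_sub, sum_sub_distrib]

lemma sq_sub_sum_mul_eq_stackingQuadForm (v : Fin (K + 1) → ℝ) (w : Fin K → ℝ) :
    (v 0 - ∑ k, w k * v k.succ) ^ 2 = stackingQuadForm (fun α β => v α * v β) w := by
  have hres : v 0 - ∑ k, w k * v k.succ = ∑ α, (Fin.cons 1 (-w) : Fin (K + 1) → ℝ) α * v α := by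
    simp [Fin.sum_univ_succ, sub_eq_add_neg]
  rw [hres, sq, sum_mul_sum]
  exact sum_congr rfl fun α _ => sum_congr rfl fun β _ => by ring

/-- The entry `D 0 0` has coefficient `1` for every `w`; the other coefficients have total
absolute value `3` on the simplex. -/
lemma abs_stackingQuadForm_sub_le {D : Fin (K + 1) → Fin (K + 1) → ℝ} {ε : ℝ}
    (hD : ∀ α β, |D α β| ≤ ε) {w : Fin K → ℝ} (hw : w ∈ stdSimplex ℝ (Fin K)) :
    |stackingQuadForm D w - D 0 0| ≤ 3 * ε := by
  have h₁ := abs_sum_mul_le_of_mem_stdSimplex hw fun k => hD 0 k.succ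
  have h₂ := abs_sum_mul_le_of_mem_stdSimplex hw fun k => hD k.succ 0
  have h₃ := abs_sum_mul_le_of_mem_stdSimplex hw fun j =>
    abs_sum_mul_le_of_mem_stdSimplex hw fun k => hD j.succ k.succ
  rw [stackingQuadForm_eq]
  simp only [mul_add, sum_add_distrib]
  rw [abs_le] at *
  constructor <;> linarith

lemma stackingQuadForm_le_add_of_abs_sub_le {G Ĝ : Fin (K + 1) → Fin (K + 1) → ℝ} {ε : ℝ}
    (hG : ∀ α β, |G α β - Ĝ α β| ≤ ε) {w v : Fin K → ℝ} (hw : w ∈ stdSimplex ℝ (Fin K))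
    (hv : v ∈ stdSimplex ℝ (Fin K)) (hmin : stackingQuadForm Ĝ w ≤ stackingQuadForm Ĝ v) :
    stackingQuadForm G w ≤ stackingQuadForm G v + 6 * ε := by
  have hw' := abs_stackingQuadForm_sub_le (D := G - Ĝ) hG hw
  have hv' := abs_stackingQuadForm_sub_le (D := G - Ĝ) hG hv
  rw [stackingQuadForm_sub, abs_le] at hw' hv'
  linarith [hw'.2, hv'.1]

lemma le_iInf_add_of_stackingQuadForm_le (hK : 0 < K)
    {G Ĝ : Fin (K + 1) → Fin (K + 1) → ℝ} {ε : ℝ} (hG : ∀ α β, |G α β - Ĝ α β| ≤ ε)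
    {ŵ : Fin K → ℝ} (hŵ : ŵ ∈ stdSimplex ℝ (Fin K))
    (hmin : ∀ w ∈ stdSimplex ℝ (Fin K), stackingQuadForm Ĝ ŵ ≤ stackingQuadForm Ĝ w)
    {risk : (Fin K → ℝ) → ℝ} {c : ℝ}
    (hrisk : ∀ w ∈ stdSimplex ℝ (Fin K), risk w = stackingQuadForm G w - c) :
    risk ŵ ≤ (⨅ k, risk (Pi.single k 1)) + 6 * ε := by
  have : Nonempty (Fin K) := ⟨⟨0, hK⟩⟩
  rw [← sub_le_iff_le_add]
  refine le_ciInf fun k => ?_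
  have hk := single_mem_stdSimplex ℝ k
  have := stackingQuadForm_le_add_of_abs_sub_le hG hŵ hk (hmin _ hk)
  rw [hrisk _ hŵ, hrisk _ hk]
  linarith

end StackingQuadForm

section Gram

variable {Ω ι : Type*} [MeasurableSpace Ω]

noncomputable def gramMatrix (P : Measure Ω) (v : Ω → ι → ℝ) (α β : ι) : ℝ := ∫ ω, v ω α * v ω β ∂P

noncomputable def sampleGram {m : ℕ} (v : Fin m → ι → ℝ) (α β : ι) : ℝ :=
  1 / (m : ℝ) * ∑ i, v i α * v i β

lemma integral_sq_sub_sum_eq_stackingQuadForm {P : Measure Ω} [IsFiniteMeasure P] {K : ℕ}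
    {v : Ω → Fin (K + 1) → ℝ} (hvm : ∀ α, AEStronglyMeasurable (fun ω => v ω α) P) {L : ℝ}
    (hvb : ∀ α, ∀ᵐ ω ∂P, |v ω α| ≤ L) (w : Fin K → ℝ) :
    ∫ ω, (v ω 0 - ∑ k, w k * v ω k.succ) ^ 2 ∂P = stackingQuadForm (gramMatrix P v) w := by
  have hint : ∀ α β, Integrable (fun ω => v ω α * v ω β) P := fun α β =>
    (Integrable.of_bound (hvm α) L (hvb α)).mul_bdd (hvm β) (hvb β)
  simp only [sq_sub_sum_mul_eq_stackingQuadForm, stackingQuadForm, gramMatrix]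
  rw [integral_finsetSum _ fun α _ => integrable_finsetSum _ fun β _ => (hint α β).const_mul _]
  refine sum_congr rfl fun α _ => ?_
  rw [integral_finsetSum _ fun β _ => (hint α β).const_mul _]
  exact sum_congr rfl fun β _ => integral_const_mul _ _

lemma mean_sq_sub_sum_eq_stackingQuadForm {K m : ℕ} (v : Fin m → Fin (K + 1) → ℝ)
    (w : Fin K → ℝ) :
    1 / (m : ℝ) * ∑ i, (v i 0 - ∑ k, w k * v i k.succ) ^ 2
      = stackingQuadForm (sampleGram v) w := by
  simp only [sq_sub_sum_mul_eq_stackingQuadForm, stackingQuadForm, sampleGram, mul_sum]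
  rw [sum_comm]
  refine sum_congr rfl fun α _ => ?_
  rw [sum_comm]
  exact sum_congr rfl fun β _ => sum_congr rfl fun i _ => by ring

end Gram

section Concentration

variable {Ω : Type*} [MeasurableSpace Ω] {P : Measure Ω} [IsProbabilityMeasure P]

lemma measureReal_mean_sub_ge_le {m : ℕ} (hm : 0 < m) {W : Fin m → Ω → ℝ}
    (hind : iIndepFun W P) (hW : ∀ i, AEMeasurable (W i) P) {C : ℝ}
    (hC : ∀ i, ∀ᵐ ω ∂P, |W i ω| ≤ C) {μ : ℝ} (hμ : ∀ i, P[W i] = μ) {ε : ℝ} (hε : 0 ≤ ε) :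
    P.real {ω | ε ≤ 1 / (m : ℝ) * ∑ i, W i ω - μ} ≤ exp (-(m * ε ^ 2 / (2 * C ^ 2))) := by
  have hmpos : (0 : ℝ) < m := Nat.cast_pos.mpr hm
  have hsubG : ∀ i ∈ (univ : Finset (Fin m)),
      HasSubgaussianMGF (fun ω => W i ω - μ) ((‖C - -C‖₊ / 2) ^ 2) P := fun i _ => by
    rw [← hμ i]
    exact hasSubgaussianMGF_of_mem_Icc (hW i) <| (hC i).mono fun ω h => abs_le.mp h
  have hoeffding := HasSubgaussianMGF.measure_sum_ge_le_of_iIndepFun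
    (hind.comp (fun _ x => x - μ) fun _ => measurable_id.sub_const μ) hsubG
    (mul_nonneg hmpos.le hε)
  have hset : {ω | ε ≤ 1 / (m : ℝ) * ∑ i, W i ω - μ} = {ω | m * ε ≤ ∑ i, (W i ω - μ)} := by
    ext ω
    simp only [Set.mem_ofPred_eq, sum_sub_distrib, sum_const, card_univ, Fintype.card_fin,
      nsmul_eq_mul]
    have hscale : (m : ℝ) * (1 / m * ∑ i, W i ω - μ) = ∑ i, W i ω - m * μ := by field_simp
    rw [← hscale]
    exact (mul_le_mul_iff_of_pos_left hmpos).symm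
  have hc : ((‖C - -C‖₊ / 2) ^ 2 : NNReal) = C ^ 2 := by simp [← two_mul]
  rw [hset]
  refine hoeffding.trans_eq ?_
  simp only [sum_const, card_univ, Fintype.card_fin, nsmul_eq_mul, NNReal.coe_mul,
    NNReal.coe_natCast, hc]
  rw [neg_div, mul_pow, sq (m : ℝ), mul_assoc, mul_left_comm 2 (m : ℝ),
    mul_div_mul_left _ _ hmpos.ne']

lemma measureReal_abs_mean_sub_ge_le {m : ℕ} (hm : 0 < m) {W : Fin m → Ω → ℝ}
    (hind : iIndepFun W P) (hW : ∀ i, AEMeasurable (W i) P) {C : ℝ}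
    (hC : ∀ i, ∀ᵐ ω ∂P, |W i ω| ≤ C) {μ : ℝ} (hμ : ∀ i, P[W i] = μ) {ε : ℝ} (hε : 0 ≤ ε) :
    P.real {ω | ε ≤ |1 / (m : ℝ) * ∑ i, W i ω - μ|}
      ≤ 2 * exp (-(m * ε ^ 2 / (2 * C ^ 2))) := by
  have hupper := measureReal_mean_sub_ge_le hm hind hW hC hμ hε
  have hlower := measureReal_mean_sub_ge_le hm (W := fun i ω => -W i ω) (μ := -μ)
    (hind.comp (fun _ x => -x) fun _ => measurable_neg) (fun i => (hW i).neg)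
    (fun i => by simpa only [abs_neg] using hC i) (fun i => by rw [integral_neg, hμ]) hε
  have hset : {ω | ε ≤ |1 / (m : ℝ) * ∑ i, W i ω - μ|}
      = {ω | ε ≤ 1 / (m : ℝ) * ∑ i, W i ω - μ}
        ∪ {ω | ε ≤ 1 / (m : ℝ) * ∑ i, -W i ω - -μ} := by
    ext ω
    simp only [Set.mem_union, Set.mem_ofPred, le_abs, sum_neg_distrib]
    ring_nf
  rw [hset, two_mul]
  exact (measureReal_union_le _ _).trans (add_le_add hupper hlower)

lemma measureReal_exists_abs_sampleGram_sub_ge_le {ι S : Type*} [Fintype ι] [MeasurableSpace S]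
    {m : ℕ} (hm : 0 < m) {T : Ω → S} {Ts : Fin m → Ω → S} (hiid : iIndepFun Ts P)
    (hident : ∀ i, IdentDistrib (Ts i) T P P) {F : S → ι → ℝ}
    (hF : ∀ α, Measurable fun s => F s α) {L : ℝ} (hFb : ∀ α, ∀ᵐ ω ∂P, |F (T ω) α| ≤ L)
    {ε : ℝ} (hε : 0 ≤ ε) :
    P.real {ω | ∃ α β, ε ≤ |sampleGram (fun i => F (Ts i ω)) α β
        - gramMatrix P (fun ω => F (T ω)) α β|}
      ≤ Fintype.card ι ^ 2 * (2 * exp (-(m * ε ^ 2 / (2 * (L ^ 2) ^ 2)))) := by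
  have hentry : ∀ α β, P.real {ω | ε ≤ |sampleGram (fun i => F (Ts i ω)) α β
      - gramMatrix P (fun ω => F (T ω)) α β|}
        ≤ 2 * exp (-(m * ε ^ 2 / (2 * (L ^ 2) ^ 2))) := fun α β => by
    have hφ : Measurable fun s => F s α * F s β := (hF α).mul (hF β)
    refine measureReal_abs_mean_sub_ge_le hm (hiid.comp (fun _ s => F s α * F s β) fun _ => hφ)
      (fun i => hφ.comp_aemeasurable (hident i).aemeasurable_fst) (fun i => ?_)
      (fun i => ((hident i).comp hφ).integral_eq) hε
    refine (hident i).symm.ae_snd (p := fun s => |F s α * F s β| ≤ L ^ 2)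
      (measurableSet_le hφ.abs measurable_const) ?_
    filter_upwards [hFb α, hFb β] with ω hα hβ
    rw [abs_mul, sq]
    exact mul_le_mul hα hβ (abs_nonneg _) ((abs_nonneg _).trans hα)
  calc P.real {ω | ∃ α β, ε ≤ |sampleGram (fun i => F (Ts i ω)) α β
        - gramMatrix P (fun ω => F (T ω)) α β|}
      ≤ P.real (⋃ q : ι × ι, {ω | ε ≤ |sampleGram (fun i => F (Ts i ω)) q.1 q.2
        - gramMatrix P (fun ω => F (T ω)) q.1 q.2|}) :=
        measureReal_mono (fun ω ⟨α, β, h⟩ => Set.mem_iUnion.2 ⟨(α, β), h⟩)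
    _ ≤ ∑ q : ι × ι, 2 * exp (-(m * ε ^ 2 / (2 * (L ^ 2) ^ 2))) :=
        (measureReal_iUnion_fintype_le _).trans (sum_le_sum fun q _ => hentry q.1 q.2)
    _ = _ := by simp [sq]

lemma sq_mul_two_mul_exp_le {n L δ : ℝ} {m : ℕ} (hn : 1 ≤ n) (hm : 0 < m) (hL : 0 < L)
    (hδ : δ ∈ Set.Ioo (0 : ℝ) 1) :
    n ^ 2 * (2 * exp (-(m * (2 * L ^ 2 * √(log (2 * n ^ 2 / δ) / m)) ^ 2 / (2 * (L ^ 2) ^ 2))))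
      ≤ δ := by
  obtain ⟨hδ0, hδ1⟩ := hδ
  set R := 2 * n ^ 2 / δ with hRdef
  have hR : 1 < R := by rw [hRdef, lt_div_iff₀ hδ0]; nlinarith
  have hmR : (m : ℝ) * (2 * L ^ 2 * √(log R / m)) ^ 2 / (2 * (L ^ 2) ^ 2) = 2 * log R := by
    have hmpos : (0 : ℝ) < m := Nat.cast_pos.mpr hm
    rw [mul_pow, sq_sqrt (div_nonneg (log_pos hR).le hmpos.le)]
    field_simp
  have hexp : exp (2 * log R) = R ^ 2 := by
    rw [two_mul, exp_add, exp_log (by linarith)]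
    ring
  rw [hmR, exp_neg, hexp, hRdef]
  field_simp
  nlinarith

lemma measure_exists_abs_sampleGram_sub_ge_le_ofReal {ι S : Type*} [Fintype ι] [Nonempty ι]
    [MeasurableSpace S] {m : ℕ} (hm : 0 < m) {T : Ω → S} {Ts : Fin m → Ω → S}
    (hiid : iIndepFun Ts P) (hident : ∀ i, IdentDistrib (Ts i) T P P) {F : S → ι → ℝ}
    (hF : ∀ α, Measurable fun s => F s α) {L : ℝ} (hL : 0 < L)
    (hFb : ∀ α, ∀ᵐ ω ∂P, |F (T ω) α| ≤ L) {δ : ℝ} (hδ : δ ∈ Set.Ioo (0 : ℝ) 1) :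
    P {ω | ∃ α β, 2 * L ^ 2 * √(log (2 * Fintype.card ι ^ 2 / δ) / m)
        ≤ |sampleGram (fun i => F (Ts i ω)) α β - gramMatrix P (fun ω => F (T ω)) α β|}
      ≤ ENNReal.ofReal δ := by
  rw [ENNReal.le_ofReal_iff_toReal_le (measure_ne_top _ _) hδ.1.le]
  exact (measureReal_exists_abs_sampleGram_sub_ge_le hm hiid hident hF hFb (by positivity)).trans
    (sq_mul_two_mul_exp_le (Nat.one_le_cast.mpr Fintype.card_pos) hm hL hδ)

lemma one_sub_le_measure_of_compl_subset {s t : Set Ω} {δ : ENNReal} (hs : P s ≤ δ)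
    (hst : sᶜ ⊆ t) : 1 - δ ≤ P t :=
  calc 1 - δ ≤ 1 - P s := tsub_le_tsub_left hs 1
    _ ≤ P sᶜ := by
      rw [tsub_le_iff_left, ← measure_univ (μ := P)]
      exact measure_univ_le_add_compl s
    _ ≤ P t := measure_mono hst

end Concentration

section Causal

variable {Ω β 𝒳 : Type*} [MeasurableSpace Ω] [MeasurableSpace β] {P : Measure Ω}

lemma ae_mem_of_indepFun_of_ae_imp {α : Type*} [MeasurableSpace α] {Z : Ω → α} {W : Ω → β}
    (hind : IndepFun Z W P) {A : Set α} (hA : MeasurableSet A) (hZA : P (Z ⁻¹' A) ≠ 0)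
    {S : Set β} (hS : MeasurableSet S) (himp : ∀ᵐ ω ∂P, Z ω ∈ A → W ω ∈ S) :
    ∀ᵐ ω ∂P, W ω ∈ S := by
  have hnull : P (Z ⁻¹' A ∩ W ⁻¹' Sᶜ) = 0 := measure_mono_null
    (fun ω (hω : ω ∈ Z ⁻¹' A ∩ W ⁻¹' Sᶜ) (h : Z ω ∈ A → W ω ∈ S) => hω.2 (h hω.1))
    (ae_iff.mp himp)
  rw [hind.measure_inter_preimage_eq_mul _ _ hA hS.compl, mul_eq_zero] at hnull
  exact ae_iff.mpr (hnull.resolve_left hZA)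

structure IsRandomizedAssignment (P : Measure Ω) (Z : Ω → ℝ) (W : Ω → β) (p : ℝ) : Prop where
  measurable : Measurable Z
  zero_or_one : ∀ ω, Z ω = 0 ∨ Z ω = 1
  measure_eq_one : P {ω | Z ω = 1} = ENNReal.ofReal p
  mem_Ioo : p ∈ Set.Ioo (0 : ℝ) 1
  indepFun : IndepFun Z W P

namespace IsRandomizedAssignment

variable {Z : Ω → ℝ} {W : Ω → β} {p : ℝ}

lemma measure_eq_one_ne_zero (hZ : IsRandomizedAssignment P Z W p) : P {ω | Z ω = 1} ≠ 0 := by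
  simpa [hZ.measure_eq_one] using hZ.mem_Ioo.1

lemma measure_eq_zero_ne_zero [IsProbabilityMeasure P] (hZ : IsRandomizedAssignment P Z W p) :
    P {ω | Z ω = 0} ≠ 0 := by
  have hcompl : {ω | Z ω = 0} = {ω | Z ω = 1}ᶜ := by
    ext ω
    rcases hZ.zero_or_one ω with h | h <;> simp [h]
  rw [hcompl, prob_compl_eq_one_sub (measurableSet_eq_fun hZ.measurable measurable_const),
    hZ.measure_eq_one, Ne, tsub_eq_zero_iff_le, not_le, ENNReal.ofReal_lt_one]
  exact hZ.mem_Ioo.2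

lemma abs_le_one (hZ : IsRandomizedAssignment P Z W p) (ω : Ω) : |Z ω| ≤ 1 := by
  rcases hZ.zero_or_one ω with h | h <;> simp [h]

lemma abs_one_sub_le_one (hZ : IsRandomizedAssignment P Z W p) (ω : Ω) : |1 - Z ω| ≤ 1 := by
  rcases hZ.zero_or_one ω with h | h <;> simp [h]

lemma integral_eq [IsProbabilityMeasure P] (hZ : IsRandomizedAssignment P Z W p) : P[Z] = p := by
  have hind : Z = {ω | Z ω = 1}.indicator 1 := by
    ext ω
    rcases hZ.zero_or_one ω with h | h <;> simp [h]
  rw [hind, integral_indicator_one (measurableSet_eq_fun hZ.measurable measurable_const),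
    measureReal_def, hZ.measure_eq_one, ENNReal.toReal_ofReal hZ.mem_Ioo.1.le]

/-- `u(W)` is seen on `Z = 1` and `v(W)` on `Z = 0`; both events have positive probability and
are independent of `W`. -/
lemma ae_abs_le [IsProbabilityMeasure P] (hZ : IsRandomizedAssignment P Z W p) {u v : β → ℝ}
    (hu : Measurable u) (hv : Measurable v) {L : ℝ}
    (hL : ∀ᵐ ω ∂P, |Z ω * u (W ω) + (1 - Z ω) * v (W ω)| ≤ L) :
    ∀ᵐ ω ∂P, |u (W ω)| ≤ L ∧ |v (W ω)| ≤ L := by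
  have hu' := ae_mem_of_indepFun_of_ae_imp hZ.indepFun (measurableSet_singleton 1)
    hZ.measure_eq_one_ne_zero (measurableSet_le hu.abs measurable_const)
    (hL.mono fun ω h (h1 : Z ω = 1) => by simpa [h1] using h)
  have hv' := ae_mem_of_indepFun_of_ae_imp hZ.indepFun (measurableSet_singleton 0)
    hZ.measure_eq_zero_ne_zero (measurableSet_le hv.abs measurable_const)
    (hL.mono fun ω h (h0 : Z ω = 0) => by simpa [h0] using h)
  exact hu'.and hv'

lemma integral_mul_add_one_sub_mul [IsProbabilityMeasure P]
    (hZ : IsRandomizedAssignment P Z W p) {a b : β → ℝ} (ha : Measurable a) (hb : Measurable b)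
    (hai : Integrable (fun ω => a (W ω)) P) (hbi : Integrable (fun ω => b (W ω)) P) :
    ∫ ω, (Z ω * a (W ω) + (1 - Z ω) * b (W ω)) ∂P
      = ∫ ω, (p * a (W ω) + (1 - p) * b (W ω)) ∂P := by
  have hZm := hZ.measurable.aestronglyMeasurable (μ := P)
  have h1Zm := (hZ.measurable.const_sub 1).aestronglyMeasurable (μ := P)
  have hZa := (hZ.indepFun.comp measurable_id ha).integral_fun_mul_eq_mul_integral hZm
    hai.aestronglyMeasurable
  have hZb := (hZ.indepFun.comp (by fun_prop : Measurable fun z : ℝ => 1 - z) hb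
    ).integral_fun_mul_eq_mul_integral h1Zm hbi.aestronglyMeasurable
  rw [integral_add (hai.bdd_mul hZm (ae_of_all _ hZ.abs_le_one))
      (hbi.bdd_mul h1Zm (ae_of_all _ hZ.abs_one_sub_le_one)),
    integral_add (hai.const_mul _) (hbi.const_mul _), integral_const_mul, integral_const_mul]
  simp only [Function.comp_def, id] at hZa hZb
  rw [hZa, hZb, integral_sub (integrable_const 1) (Integrable.of_bound hZm 1
    (ae_of_all _ hZ.abs_le_one)), hZ.integral_eq]
  simp

lemma ae_abs_mul_add_one_sub_mul_le [IsProbabilityMeasure P]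
    (hZ : IsRandomizedAssignment P Z W p) {u v : β → ℝ} (hu : Measurable u) (hv : Measurable v)
    {L : ℝ} (hL : ∀ᵐ ω ∂P, |Z ω * u (W ω) + (1 - Z ω) * v (W ω)| ≤ L) :
    ∀ᵐ ω ∂P, |p * u (W ω) + (1 - p) * v (W ω)| ≤ L := by
  obtain ⟨hp0, hp1⟩ := hZ.mem_Ioo
  filter_upwards [hZ.ae_abs_le hu hv hL] with ω ⟨hu, hv⟩
  calc |p * u (W ω) + (1 - p) * v (W ω)| ≤ p * |u (W ω)| + (1 - p) * |v (W ω)| := by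
        refine (abs_add_le _ _).trans_eq ?_
        rw [abs_mul, abs_mul, abs_of_pos hp0, abs_of_pos (sub_pos.mpr hp1)]
    _ ≤ p * L + (1 - p) * L := by gcongr
    _ = L := by ring

lemma integral_mul_add_one_sub_mul_mul [IsProbabilityMeasure P]
    (hZ : IsRandomizedAssignment P Z W p) (hW : Measurable W) {u v : β → ℝ} (hu : Measurable u)
    (hv : Measurable v) {L : ℝ} (hL : ∀ᵐ ω ∂P, |Z ω * u (W ω) + (1 - Z ω) * v (W ω)| ≤ L)
    {g : β → ℝ} (hg : Measurable g) {C : ℝ} (hgb : ∀ᵐ ω ∂P, |g (W ω)| ≤ C) :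
    ∫ ω, (Z ω * u (W ω) + (1 - Z ω) * v (W ω)) * g (W ω) ∂P
      = ∫ ω, (p * u (W ω) + (1 - p) * v (W ω)) * g (W ω) ∂P := by
  have huv := hZ.ae_abs_le hu hv hL
  have hint : ∀ {a : β → ℝ}, Measurable a → (∀ᵐ ω ∂P, |a (W ω)| ≤ L) →
      Integrable (fun ω => a (W ω) * g (W ω)) P := fun ha hab =>
    (Integrable.of_bound (ha.comp hW).aestronglyMeasurable L hab).mul_bdd
      (hg.comp hW).aestronglyMeasurable hgb
  simp only [add_mul, mul_assoc]
  exact hZ.integral_mul_add_one_sub_mul (hu.mul hg) (hv.mul hg)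
    (hint hu (huv.mono fun _ h => h.1)) (hint hv (huv.mono fun _ h => h.2))

end IsRandomizedAssignment

lemma integral_mul_comp_eq_of_condExp_eq [MeasurableSpace 𝒳] [IsFiniteMeasure P] {X : Ω → 𝒳}
    (hX : Measurable X) {f : Ω → ℝ} (hf : Integrable f P) {τ : 𝒳 → ℝ}
    (hτ : P[f | MeasurableSpace.comap X inferInstance] =ᵐ[P] fun ω => τ (X ω))
    {g : 𝒳 → ℝ} (hg : Measurable g) {C : ℝ} (hgb : ∀ᵐ ω ∂P, |g (X ω)| ≤ C) :
    ∫ ω, f ω * g (X ω) ∂P = ∫ ω, τ (X ω) * g (X ω) ∂P := by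
  have hgX : StronglyMeasurable[MeasurableSpace.comap X inferInstance] fun ω => g (X ω) :=
    (hg.comp (comap_measurable X)).stronglyMeasurable
  calc ∫ ω, f ω * g (X ω) ∂P = ∫ ω, ((fun ω => g (X ω)) * f) ω ∂P := by simp [mul_comm]
    _ = ∫ ω, P[(fun ω => g (X ω)) * f | MeasurableSpace.comap X inferInstance] ω ∂P :=
        (integral_condExp hX.comap_le).symm
    _ = ∫ ω, τ (X ω) * g (X ω) ∂P := integral_congr_ae <|
        (condExp_stronglyMeasurable_mul_of_bound hX.comap_le hgX hf C hgb).trans <|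
          (EventuallyEq.rfl.mul hτ).trans (ae_of_all _ fun ω => mul_comm _ _)

lemma integral_sq_sub_eq_add_of_integral_mul_eq_zero {a b c : Ω → ℝ} (ha : MemLp a 2 P)
    (hb : MemLp b 2 P) (hc : MemLp c 2 P) (horth : ∫ ω, (a ω - b ω) * (c ω - b ω) ∂P = 0) :
    ∫ ω, (a ω - c ω) ^ 2 ∂P = ∫ ω, (a ω - b ω) ^ 2 ∂P + ∫ ω, (c ω - b ω) ^ 2 ∂P := by
  have hab : Integrable (fun ω => (a ω - b ω) ^ 2) P := (ha.sub hb).integrable_sq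
  have hcb : Integrable (fun ω => (c ω - b ω) ^ 2) P := (hc.sub hb).integrable_sq
  have hmul : Integrable (fun ω => (a ω - b ω) * (c ω - b ω)) P :=
    (ha.sub hb).integrable_mul (hc.sub hb)
  calc ∫ ω, (a ω - c ω) ^ 2 ∂P
      = ∫ ω, ((a ω - b ω) ^ 2 + (c ω - b ω) ^ 2 - 2 * ((a ω - b ω) * (c ω - b ω))) ∂P :=
        integral_congr_ae (ae_of_all _ fun ω => by ring)
    _ = _ := by
        have hsum : Integrable (fun ω => (a ω - b ω) ^ 2 + (c ω - b ω) ^ 2) P := hab.add hcb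
        rw [integral_sub hsum (hmul.const_mul 2), integral_add hab hcb, integral_const_mul,
          horth, mul_zero, sub_zero]

/-- The pseudo-outcome of a unit `s = (x, y, z)`: covariates, observed outcome, treatment. -/
noncomputable def pseudoOutcome (μ0 μ1 : 𝒳 → ℝ) (p : ℝ) (s : 𝒳 × ℝ × ℝ) : ℝ :=
  (μ1 s.1 - μ0 s.1) + (s.2.1 - μ1 s.1) * s.2.2 / p - (s.2.1 - μ0 s.1) * (1 - s.2.2) / (1 - p)

lemma measurable_pseudoOutcome [MeasurableSpace 𝒳] {μ0 μ1 : 𝒳 → ℝ} (hμ0 : Measurable μ0)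
    (hμ1 : Measurable μ1) (p : ℝ) : Measurable (pseudoOutcome μ0 μ1 p) := by
  unfold pseudoOutcome
  fun_prop

lemma pseudoOutcome_eq_mul_add (μ0 μ1 : 𝒳 → ℝ) (p : ℝ) (x : 𝒳) (y0 y1 : ℝ) {z : ℝ}
    (hz : z = 0 ∨ z = 1) :
    pseudoOutcome μ0 μ1 p (x, z * y1 + (1 - z) * y0, z)
      = z * pseudoOutcome μ0 μ1 p (x, y1, 1) + (1 - z) * pseudoOutcome μ0 μ1 p (x, y0, 0) := by
  rcases hz with rfl | rfl <;> simp

lemma mul_pseudoOutcome_add_mul_pseudoOutcome (μ0 μ1 : 𝒳 → ℝ) {p : ℝ} (hp0 : p ≠ 0)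
    (hp1 : p ≠ 1) (x : 𝒳) (y0 y1 : ℝ) :
    p * pseudoOutcome μ0 μ1 p (x, y1, 1) + (1 - p) * pseudoOutcome μ0 μ1 p (x, y0, 0)
      = y1 - y0 := by
  have hp1' : 1 - p ≠ 0 := sub_ne_zero.mpr hp1.symm
  simp only [pseudoOutcome, sub_self, mul_zero, zero_div, sub_zero, mul_one]
  field_simp
  ring

section PseudoOutcome

variable [MeasurableSpace 𝒳] [IsProbabilityMeasure P] {X : Ω → 𝒳} {Y0 Y1 Z Y τhat : Ω → ℝ}
  {p : ℝ} {μ0 μ1 : 𝒳 → ℝ} {L : ℝ}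

lemma ae_abs_sub_le_of_pseudoOutcome
    (hZ : IsRandomizedAssignment P Z (fun ω => (X ω, Y0 ω, Y1 ω)) p)
    (hY : ∀ ω, Y ω = Z ω * Y1 ω + (1 - Z ω) * Y0 ω) (hμ0 : Measurable μ0) (hμ1 : Measurable μ1)
    (hτhat : ∀ ω, τhat ω = pseudoOutcome μ0 μ1 p (X ω, Y ω, Z ω))
    (hbτhat : ∀ᵐ ω ∂P, |τhat ω| ≤ L) :
    ∀ᵐ ω ∂P, |Y1 ω - Y0 ω| ≤ L := by
  have hu : Measurable fun s : 𝒳 × ℝ × ℝ => pseudoOutcome μ0 μ1 p (s.1, s.2.2, 1) :=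
    (measurable_pseudoOutcome hμ0 hμ1 p).comp (by fun_prop)
  have hv : Measurable fun s : 𝒳 × ℝ × ℝ => pseudoOutcome μ0 μ1 p (s.1, s.2.1, 0) :=
    (measurable_pseudoOutcome hμ0 hμ1 p).comp (by fun_prop)
  have hrep := hZ.ae_abs_mul_add_one_sub_mul_le hu hv <| hbτhat.mono fun ω h => by
    rwa [hτhat, hY, pseudoOutcome_eq_mul_add μ0 μ1 p _ _ _ (hZ.zero_or_one ω)] at h
  simpa only [mul_pseudoOutcome_add_mul_pseudoOutcome μ0 μ1 hZ.mem_Ioo.1.ne' hZ.mem_Ioo.2.ne]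
    using hrep

lemma integral_pseudoOutcome_mul_eq (hX : Measurable X) (hY0 : Measurable Y0)
    (hY1 : Measurable Y1) (hZ : IsRandomizedAssignment P Z (fun ω => (X ω, Y0 ω, Y1 ω)) p)
    (hY : ∀ ω, Y ω = Z ω * Y1 ω + (1 - Z ω) * Y0 ω) (hμ0 : Measurable μ0) (hμ1 : Measurable μ1)
    (hτhat : ∀ ω, τhat ω = pseudoOutcome μ0 μ1 p (X ω, Y ω, Z ω))
    (hbτhat : ∀ᵐ ω ∂P, |τhat ω| ≤ L) {g : 𝒳 → ℝ} (hg : Measurable g) {C : ℝ}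
    (hgb : ∀ᵐ ω ∂P, |g (X ω)| ≤ C) :
    ∫ ω, τhat ω * g (X ω) ∂P = ∫ ω, (Y1 ω - Y0 ω) * g (X ω) ∂P := by
  have hu : Measurable fun s : 𝒳 × ℝ × ℝ => pseudoOutcome μ0 μ1 p (s.1, s.2.2, 1) :=
    (measurable_pseudoOutcome hμ0 hμ1 p).comp (by fun_prop)
  have hv : Measurable fun s : 𝒳 × ℝ × ℝ => pseudoOutcome μ0 μ1 p (s.1, s.2.1, 0) :=
    (measurable_pseudoOutcome hμ0 hμ1 p).comp (by fun_prop)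
  have hrep : ∀ ω, τhat ω = Z ω * pseudoOutcome μ0 μ1 p (X ω, Y1 ω, 1)
      + (1 - Z ω) * pseudoOutcome μ0 μ1 p (X ω, Y0 ω, 0) := fun ω => by
    rw [hτhat, hY, pseudoOutcome_eq_mul_add μ0 μ1 p _ _ _ (hZ.zero_or_one ω)]
  simp only [hrep] at hbτhat ⊢
  rw [hZ.integral_mul_add_one_sub_mul_mul (by fun_prop) hu hv hbτhat
    (g := fun s => g s.1) (hg.comp measurable_fst) hgb]
  simp only [mul_pseudoOutcome_add_mul_pseudoOutcome μ0 μ1 hZ.mem_Ioo.1.ne' hZ.mem_Ioo.2.ne]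

theorem integral_sq_pseudoOutcome_sub_eq (hX : Measurable X) (hY0 : Measurable Y0)
    (hY1 : Measurable Y1) (hZ : IsRandomizedAssignment P Z (fun ω => (X ω, Y0 ω, Y1 ω)) p)
    (hY : ∀ ω, Y ω = Z ω * Y1 ω + (1 - Z ω) * Y0 ω) {τ : 𝒳 → ℝ} (hτm : Measurable τ)
    (hτ : P[fun ω => Y1 ω - Y0 ω | MeasurableSpace.comap X inferInstance]
      =ᵐ[P] fun ω => τ (X ω))
    (hμ0 : Measurable μ0) (hμ1 : Measurable μ1)
    (hτhat : ∀ ω, τhat ω = pseudoOutcome μ0 μ1 p (X ω, Y ω, Z ω))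
    (hbτhat : ∀ᵐ ω ∂P, |τhat ω| ≤ L) {h : 𝒳 → ℝ} (hh : Measurable h) {C : ℝ}
    (hhb : ∀ᵐ ω ∂P, |h (X ω)| ≤ C) :
    ∫ ω, (τhat ω - h (X ω)) ^ 2 ∂P
      = ∫ ω, (τhat ω - τ (X ω)) ^ 2 ∂P + ∫ ω, (h (X ω) - τ (X ω)) ^ 2 ∂P := by
  have hZm := hZ.measurable
  have hτhatm : Measurable τhat := by
    rw [funext hτhat, funext hY]
    exact (measurable_pseudoOutcome hμ0 hμ1 p).comp (by fun_prop)
  have hdiff := ae_abs_sub_le_of_pseudoOutcome hZ hY hμ0 hμ1 hτhat hbτhat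
  have hτb : ∀ᵐ ω ∂P, |τ (X ω)| ≤ L := by
    filter_upwards [hτ, ae_bdd_abs_condExp_of_ae_bdd_abs hdiff] with ω hω hb
    rwa [← hω]
  have hgb : ∀ᵐ ω ∂P, |h (X ω) - τ (X ω)| ≤ C + L := by
    filter_upwards [hhb, hτb] with ω hh hτ
    exact (abs_sub _ _).trans (add_le_add hh hτ)
  have hunbiased : ∫ ω, τhat ω * (h (X ω) - τ (X ω)) ∂P
      = ∫ ω, τ (X ω) * (h (X ω) - τ (X ω)) ∂P :=
    (integral_pseudoOutcome_mul_eq hX hY0 hY1 hZ hY hμ0 hμ1 hτhat hbτhat (hh.sub hτm) hgb).trans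
      (integral_mul_comp_eq_of_condExp_eq hX
        (Integrable.of_bound (hY1.sub hY0).aestronglyMeasurable L hdiff) hτ (hh.sub hτm) hgb)
  have hgm : AEStronglyMeasurable (fun ω => h (X ω) - τ (X ω)) P := by fun_prop
  have hint : ∀ {a : Ω → ℝ}, Measurable a → (∀ᵐ ω ∂P, |a ω| ≤ L) →
      Integrable (fun ω => a ω * (h (X ω) - τ (X ω))) P := fun ha hab =>
    (Integrable.of_bound ha.aestronglyMeasurable L hab).mul_bdd hgm hgb
  refine integral_sq_sub_eq_add_of_integral_mul_eq_zero
    (MemLp.of_bound hτhatm.aestronglyMeasurable L hbτhat)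
    (MemLp.of_bound (hτm.comp hX).aestronglyMeasurable L hτb)
    (MemLp.of_bound (hh.comp hX).aestronglyMeasurable C hhb) ?_
  simp only [sub_mul]
  rw [integral_sub (hint hτhatm hbτhat) (hint (a := fun ω => τ (X ω)) (hτm.comp hX) hτb),
    hunbiased, sub_self]

end PseudoOutcome

end Causal

theorem causal_stacking_finite_sample_bound_general
    {Ω 𝒳 : Type*} [MeasurableSpace Ω] [MeasurableSpace 𝒳]
    (P : Measure Ω) [IsProbabilityMeasure P]
    (X : Ω → 𝒳) (Y0 Y1 Z : Ω → ℝ)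
    (hX : Measurable X) (hY0 : Measurable Y0) (hY1 : Measurable Y1) (hZ : Measurable Z)
    (hZval : ∀ ω, Z ω = 0 ∨ Z ω = 1)
    (p : ℝ) (hp : p ∈ Set.Ioo (0 : ℝ) 1)
    (hZp : P {ω | Z ω = 1} = ENNReal.ofReal p)
    (hindep : IndepFun Z (fun ω => (X ω, Y0 ω, Y1 ω)) P)
    (Y : Ω → ℝ) (hY : ∀ ω, Y ω = Z ω * Y1 ω + (1 - Z ω) * Y0 ω)
    -- the CATE function: a measurable version of E[Y₁ − Y₀ | X]
    (τ : 𝒳 → ℝ) (hτm : Measurable τ)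
    (hτ : P[fun ω => Y1 ω - Y0 ω | MeasurableSpace.comap X inferInstance]
        =ᵐ[P] fun ω => τ (X ω))
    (μ0 μ1 : 𝒳 → ℝ) (hμ0 : Measurable μ0) (hμ1 : Measurable μ1)
    (K : ℕ) (hK : 0 < K)
    (τk : Fin K → 𝒳 → ℝ) (hτk : ∀ k, Measurable (τk k))
    -- the pseudo-outcome built from the generic sample `(X, Y, Z)`
    (τhat : Ω → ℝ)
    (hτhat : ∀ ω, τhat ω = (μ1 (X ω) - μ0 (X ω))
        + (Y ω - μ1 (X ω)) * Z ω / p - (Y ω - μ0 (X ω)) * (1 - Z ω) / (1 - p))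
    -- boundedness: |Y₀|, |Y₁|, |τ̂| ≤ L and |τ̂_k(X)| ≤ L almost surely
    (L : ℝ) (hL : 0 < L)
    (hbτhat : ∀ᵐ ω ∂P, |τhat ω| ≤ L)
    (hbτk : ∀ k, ∀ᵐ ω ∂P, |τk k (X ω)| ≤ L)
    -- the i.i.d. samples
    (m : ℕ) (hm : 0 < m)
    (Xs : Fin m → Ω → 𝒳) (Ys Zs : Fin m → Ω → ℝ)
    (hXs : ∀ i, Measurable (Xs i)) (hYs : ∀ i, Measurable (Ys i))
    (hZs : ∀ i, Measurable (Zs i))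
    (hiid : iIndepFun (fun i ω => (Xs i ω, Ys i ω, Zs i ω)) P)
    (hident : ∀ i, Measure.map (fun ω => (Xs i ω, Ys i ω, Zs i ω)) P
        = Measure.map (fun ω => (X ω, Y ω, Z ω)) P)
    -- the per-sample pseudo-outcomes
    (τhats : Fin m → Ω → ℝ)
    (hτhats : ∀ i ω, τhats i ω = (μ1 (Xs i ω) - μ0 (Xs i ω))
        + (Ys i ω - μ1 (Xs i ω)) * Zs i ω / p
        - (Ys i ω - μ0 (Xs i ω)) * (1 - Zs i ω) / (1 - p))
    -- ŵ is any minimizer of the empirical stacking loss over the simplex Δ_K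
    (what : Ω → Fin K → ℝ)
    (hwhat_mem : ∀ ω, (∀ k, 0 ≤ what ω k) ∧ ∑ k, what ω k = 1)
    (hwhat_min : ∀ ω, ∀ w : Fin K → ℝ, (∀ k, 0 ≤ w k) → (∑ k, w k = 1) →
      (1 / (m : ℝ)) * ∑ i, (τhats i ω - ∑ k, what ω k * τk k (Xs i ω)) ^ 2
        ≤ (1 / (m : ℝ)) * ∑ i, (τhats i ω - ∑ k, w k * τk k (Xs i ω)) ^ 2)
    (δ : ℝ) (hδ : δ ∈ Set.Ioo (0 : ℝ) 1) :
    1 - ENNReal.ofReal δ ≤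
      P {ω | ∫ ω', (∑ k, what ω k * τk k (X ω') - τ (X ω')) ^ 2 ∂P
        ≤ (⨅ k : Fin K, ∫ ω', (τk k (X ω') - τ (X ω')) ^ 2 ∂P)
          + 12 * L ^ 2 * Real.sqrt (Real.log (2 * (K + 1) ^ 2 / δ) / m)} := by
  have hRCT : IsRandomizedAssignment P Z (fun ω => (X ω, Y0 ω, Y1 ω)) p :=
    ⟨hZ, hZval, hZp, hp, hindep⟩
  have hYm : Measurable Y := by
    rw [funext hY]
    fun_prop
  set feat : 𝒳 × ℝ × ℝ → Fin (K + 1) → ℝ :=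
    fun s => Fin.cons (pseudoOutcome μ0 μ1 p s) fun k => τk k s.1
  have hfeat : ∀ α, Measurable fun s => feat s α :=
    Fin.cases (measurable_pseudoOutcome hμ0 hμ1 p) fun k => (hτk k).comp measurable_fst
  have hfeatb : ∀ α, ∀ᵐ ω ∂P, |feat (X ω, Y ω, Z ω) α| ≤ L :=
    Fin.cases (hbτhat.mono fun ω h => by rwa [hτhat] at h) hbτk
  have hbad := measure_exists_abs_sampleGram_sub_ge_le_ofReal hm hiid
    (fun i => ⟨by fun_prop, by fun_prop, hident i⟩) hfeat hL hfeatb hδ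
  simp only [Fintype.card_fin, Nat.cast_add, Nat.cast_one] at hbad
  refine one_sub_le_measure_of_compl_subset hbad fun ω hω => ?_
  simp only [Set.mem_compl_iff, Set.mem_ofPred_eq, not_exists, not_le] at hω
  have hrisk : ∀ w ∈ stdSimplex ℝ (Fin K), ∫ ω', (∑ k, w k * τk k (X ω') - τ (X ω')) ^ 2 ∂P
      = stackingQuadForm (gramMatrix P fun ω => feat (X ω, Y ω, Z ω)) w
        - ∫ ω', (τhat ω' - τ (X ω')) ^ 2 ∂P := fun w hw => by
    rw [← integral_sq_sub_sum_eq_stackingQuadForm (v := fun ω => feat (X ω, Y ω, Z ω))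
      (fun α => ((hfeat α).comp (by fun_prop)).aestronglyMeasurable) hfeatb,
      eq_sub_iff_add_eq', ← integral_sq_pseudoOutcome_sub_eq hX hY0 hY1 hRCT hY hτm hτ hμ0 hμ1
        hτhat hbτhat (h := fun x => ∑ k, w k * τk k x) (by fun_prop)
        ((ae_all_iff.2 hbτk).mono fun ω h => abs_sum_mul_le_of_mem_stdSimplex hw h)]
    simp only [hτhat]
    rfl
  have hmin : ∀ w ∈ stdSimplex ℝ (Fin K),
      stackingQuadForm (sampleGram fun i => feat (Xs i ω, Ys i ω, Zs i ω)) (what ω)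
        ≤ stackingQuadForm (sampleGram fun i => feat (Xs i ω, Ys i ω, Zs i ω)) w := by
    intro w hw
    rw [← mean_sq_sub_sum_eq_stackingQuadForm, ← mean_sq_sub_sum_eq_stackingQuadForm]
    have hŵ := hwhat_min ω w hw.1 hw.2
    simp only [hτhats] at hŵ
    exact hŵ
  have hexcess := le_iInf_add_of_stackingQuadForm_le hK
    (fun α β => (abs_sub_comm _ _).trans_le (hω α β).le) (hwhat_mem ω) hmin hrisk
  simp only [Pi.single_apply, ite_mul, one_mul, zero_mul, sum_ite_eq', mem_univ, if_true]
    at hexcess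
  exact hexcess.trans_eq (by ring)

/-- Proposition 1 (finite-sample bound for causal stacking): if the potential outcomes,
the pseudo-outcome and the candidate models are bounded by `L`, then with probability at
least `1 − δ` the stacked model `τ̂_s = Σ_k ŵ_k τ̂_k` obtained by minimizing the empirical
stacking loss over the simplex satisfies
`‖τ̂_s − τ‖₂² ≤ min_k ‖τ̂_k − τ‖₂² + 12 L² √(log(2(K+1)²/δ)/m)`. -/
theorem causal_stacking_finite_sample_bound
    {Ω 𝒳 : Type*} [MeasurableSpace Ω] [MeasurableSpace 𝒳]
    (P : Measure Ω) [IsProbabilityMeasure P]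
    (X : Ω → 𝒳) (Y0 Y1 Z : Ω → ℝ)
    (hX : Measurable X) (hY0 : Measurable Y0) (hY1 : Measurable Y1) (hZ : Measurable Z)
    (hZval : ∀ ω, Z ω = 0 ∨ Z ω = 1)
    (p : ℝ) (hp : p ∈ Set.Ioo (0 : ℝ) 1)
    (hZp : P {ω | Z ω = 1} = ENNReal.ofReal p)
    (hindep : IndepFun Z (fun ω => (X ω, Y0 ω, Y1 ω)) P)
    (Y : Ω → ℝ) (hY : ∀ ω, Y ω = Z ω * Y1 ω + (1 - Z ω) * Y0 ω)
    -- the CATE function: a measurable version of E[Y₁ − Y₀ | X]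
    (τ : 𝒳 → ℝ) (hτm : Measurable τ)
    (hτ : P[fun ω => Y1 ω - Y0 ω | MeasurableSpace.comap X inferInstance]
        =ᵐ[P] fun ω => τ (X ω))
    (μ0 μ1 : 𝒳 → ℝ) (hμ0 : Measurable μ0) (hμ1 : Measurable μ1)
    (K : ℕ) (hK : 0 < K)
    (τk : Fin K → 𝒳 → ℝ) (hτk : ∀ k, Measurable (τk k))
    -- the pseudo-outcome built from the generic sample `(X, Y, Z)`
    (τhat : Ω → ℝ)
    (hτhat : ∀ ω, τhat ω = (μ1 (X ω) - μ0 (X ω))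
        + (Y ω - μ1 (X ω)) * Z ω / p - (Y ω - μ0 (X ω)) * (1 - Z ω) / (1 - p))
    -- boundedness: |Y₀|, |Y₁|, |τ̂| ≤ L and |τ̂_k(X)| ≤ L almost surely
    (L : ℝ) (hL : 0 < L)
    (hbY0 : ∀ᵐ ω ∂P, |Y0 ω| ≤ L) (hbY1 : ∀ᵐ ω ∂P, |Y1 ω| ≤ L)
    (hbτhat : ∀ᵐ ω ∂P, |τhat ω| ≤ L)
    (hbτk : ∀ k, ∀ᵐ ω ∂P, |τk k (X ω)| ≤ L)
    -- the i.i.d. samples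
    (m : ℕ) (hm : 0 < m)
    (Xs : Fin m → Ω → 𝒳) (Ys Zs : Fin m → Ω → ℝ)
    (hXs : ∀ i, Measurable (Xs i)) (hYs : ∀ i, Measurable (Ys i))
    (hZs : ∀ i, Measurable (Zs i))
    (hiid : iIndepFun (fun i ω => (Xs i ω, Ys i ω, Zs i ω)) P)
    (hident : ∀ i, Measure.map (fun ω => (Xs i ω, Ys i ω, Zs i ω)) P
        = Measure.map (fun ω => (X ω, Y ω, Z ω)) P)
    -- the per-sample pseudo-outcomes
    (τhats : Fin m → Ω → ℝ)
    (hτhats : ∀ i ω, τhats i ω = (μ1 (Xs i ω) - μ0 (Xs i ω))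
        + (Ys i ω - μ1 (Xs i ω)) * Zs i ω / p
        - (Ys i ω - μ0 (Xs i ω)) * (1 - Zs i ω) / (1 - p))
    -- ŵ is any minimizer of the empirical stacking loss over the simplex Δ_K
    (what : Ω → Fin K → ℝ)
    (hwhat_mem : ∀ ω, (∀ k, 0 ≤ what ω k) ∧ ∑ k, what ω k = 1)
    (hwhat_min : ∀ ω, ∀ w : Fin K → ℝ, (∀ k, 0 ≤ w k) → (∑ k, w k = 1) →
      (1 / (m : ℝ)) * ∑ i, (τhats i ω - ∑ k, what ω k * τk k (Xs i ω)) ^ 2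
        ≤ (1 / (m : ℝ)) * ∑ i, (τhats i ω - ∑ k, w k * τk k (Xs i ω)) ^ 2)
    (δ : ℝ) (hδ : δ ∈ Set.Ioo (0 : ℝ) 1) :
    1 - ENNReal.ofReal δ ≤
      P {ω | ∫ ω', (∑ k, what ω k * τk k (X ω') - τ (X ω')) ^ 2 ∂P
        ≤ (⨅ k : Fin K, ∫ ω', (τk k (X ω') - τ (X ω')) ^ 2 ∂P)
          + 12 * L ^ 2 * Real.sqrt (Real.log (2 * (K + 1) ^ 2 / δ) / m)} :=
  causal_stacking_finite_sample_bound_general P X Y0 Y1 Z hX hY0 hY1 hZ hZval p hp hZp hindep Y hY τ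
    hτm hτ μ0 μ1 hμ0 hμ1 K hK τk hτk τhat hτhat L hL hbτhat hbτk m hm Xs Ys Zs hXs hYs hZs hiid
    hident τhats hτhats what hwhat_mem hwhat_min δ hδ
end

section
/- Suppose Y₀, Y₁ are integrable, μ̂₀ and μ̂₁ are bounded measurable functions, and Z is independent of (X, Y₀, Y₁) with P(Z = 1) = p ∈ (0,1). Then the pseudo-outcome τ̂ is conditionally unbiased for the CATE: E[τ̂ | X] = τ(X) almost surely, i.e., E[ μ̂₁(X) − μ̂₀(X) + (Y − μ̂₁(X))·Z/p − (Y − μ̂₀(X))·(1−Z)/(1−p) | X ] = E[Y₁ − Y₀ | X] almost surely. This holds for any choice of the functions μ̂₀ and μ̂₁. -/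
/-!
Since `Z` is `0` or `1`, `Y` may be replaced by `Y₁` in the treated term and by `Y₀` in the
control term: `τ̂ = (μ̂₁ - μ̂₀)(X) + (Z / p) (Y₁ - μ̂₁(X)) - ((1 - Z) / (1 - p)) (Y₀ - μ̂₀(X))`.
Condition first on the whole vector `W = (X, Y₀, Y₁)` rather than on `X`. As `Z` is independent
of `W` with `E[Z] = p`, both weights have mean one and act as the constant `1` under `E[· | W]`,
so `E[τ̂ | W] = Y₁ - Y₀`. The tower property over `σ(X) ⊆ σ(W)` then gives
`E[τ̂ | X] = E[Y₁ - Y₀ | X] = τ(X)`.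
-/

open MeasureTheory ProbabilityTheory

section IndepCondExp

variable {Ω : Type*} {m₁ m₂ mΩ : MeasurableSpace Ω} {μ : Measure Ω} [IsFiniteMeasure μ]

theorem condExp_mul_of_indep {f g : Ω → ℝ} (hle₁ : m₁ ≤ mΩ) (hle₂ : m₂ ≤ mΩ)
    (hind : Indep m₁ m₂ μ) (hf : StronglyMeasurable[m₁] f) (hg : StronglyMeasurable[m₂] g)
    (hfg : Integrable (f * g) μ) (hfi : Integrable f μ) :
    μ[f * g | m₂] =ᵐ[μ] fun ω => μ[f] * g ω := by
  filter_upwards [condExp_mul_of_stronglyMeasurable_right hg hfg hfi,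
    condExp_indep_eq hle₁ hle₂ hf hind] with ω h_pull h_indep
  rw [h_pull, Pi.mul_apply, h_indep]

theorem condExp_mul_eq_self_of_indep_of_integral_eq_one {f g : Ω → ℝ} {C : ℝ}
    (hle₁ : m₁ ≤ mΩ) (hle₂ : m₂ ≤ mΩ) (hind : Indep m₁ m₂ μ)
    (hf : StronglyMeasurable[m₁] f) (hf_bound : ∀ ω, |f ω| ≤ C) (hf_mean : μ[f] = 1)
    (hg : StronglyMeasurable[m₂] g) (hgi : Integrable g μ) :
    μ[f * g | m₂] =ᵐ[μ] g := by
  have hf_meas : AEStronglyMeasurable f μ := (hf.mono hle₁).aestronglyMeasurable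
  have hfi : Integrable f μ := .of_bound hf_meas C (ae_of_all _ hf_bound)
  have hfg : Integrable (f * g) μ := hgi.bdd_mul hf_meas (ae_of_all _ hf_bound)
  simpa [hf_mean] using condExp_mul_of_indep hle₁ hle₂ hind hf hg hfg hfi

theorem condExp_add_mul_sub_mul_eq_of_indep {a A B w₁ w₀ : Ω → ℝ} {C₁ C₀ : ℝ}
    (hle₁ : m₁ ≤ mΩ) (hle₂ : m₂ ≤ mΩ) (hind : Indep m₁ m₂ μ)
    (hw₁ : StronglyMeasurable[m₁] w₁) (hw₀ : StronglyMeasurable[m₁] w₀)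
    (hw₁_bound : ∀ ω, |w₁ ω| ≤ C₁) (hw₀_bound : ∀ ω, |w₀ ω| ≤ C₀)
    (hw₁_mean : μ[w₁] = 1) (hw₀_mean : μ[w₀] = 1)
    (ha : StronglyMeasurable[m₂] a) (hA : StronglyMeasurable[m₂] A)
    (hB : StronglyMeasurable[m₂] B)
    (ha_int : Integrable a μ) (hA_int : Integrable A μ) (hB_int : Integrable B μ) :
    μ[a + w₁ * A - w₀ * B | m₂] =ᵐ[μ] a + A - B := by
  have hw₁A_int : Integrable (w₁ * A) μ :=
    hA_int.bdd_mul (hw₁.mono hle₁).aestronglyMeasurable (ae_of_all _ hw₁_bound)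
  have hw₀B_int : Integrable (w₀ * B) μ :=
    hB_int.bdd_mul (hw₀.mono hle₁).aestronglyMeasurable (ae_of_all _ hw₀_bound)
  filter_upwards [condExp_sub (ha_int.add hw₁A_int) hw₀B_int m₂,
    condExp_add ha_int hw₁A_int m₂,
    condExp_mul_eq_self_of_indep_of_integral_eq_one hle₁ hle₂ hind hw₁ hw₁_bound hw₁_mean
      hA hA_int,
    condExp_mul_eq_self_of_indep_of_integral_eq_one hle₁ hle₂ hind hw₀ hw₀_bound hw₀_mean
      hB hB_int] with ω h_sub h_add h_A h_B
  rw [h_sub, Pi.sub_apply, h_add, Pi.add_apply, h_A, h_B,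
    condExp_of_stronglyMeasurable hle₂ ha ha_int]
  rfl

end IndepCondExp

theorem abs_div_le_inv_of_eq_zero_or_eq_one {z c : ℝ} (hz : z = 0 ∨ z = 1) (hc : 0 < c) :
    |z / c| ≤ c⁻¹ := by
  rcases hz with rfl | rfl <;> simp [abs_of_pos hc, hc.le]

theorem aipw_eq_of_eq_zero_or_eq_one {z p y₀ y₁ m₀ m₁ : ℝ} (hz : z = 0 ∨ z = 1) :
    (m₁ - m₀) + (z * y₁ + (1 - z) * y₀ - m₁) * z / p
        - (z * y₁ + (1 - z) * y₀ - m₀) * (1 - z) / (1 - p)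
      = (m₁ - m₀) + z / p * (y₁ - m₁) - (1 - z) / (1 - p) * (y₀ - m₀) := by
  rcases hz with rfl | rfl <;> ring

section BernoulliTreatment

variable {Ω : Type*} {m mΩ : MeasurableSpace Ω} {μ : Measure Ω} {Z : Ω → ℝ} {p : ℝ}

theorem integral_eq_of_forall_eq_zero_or_eq_one (hZ : Measurable Z)
    (hZval : ∀ ω, Z ω = 0 ∨ Z ω = 1) (hp : 0 ≤ p)
    (hZp : μ {ω | Z ω = 1} = ENNReal.ofReal p) :
    μ[Z] = p := by
  have hs : MeasurableSet {ω | Z ω = 1} := hZ (measurableSet_singleton 1)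
  calc μ[Z] = ∫ ω, {ω | Z ω = 1}.indicator 1 ω ∂μ := by
        congr 1
        funext ω
        rcases hZval ω with h | h <;> simp [h]
    _ = p := by
        rw [integral_indicator_one hs, measureReal_def, hZp, ENNReal.toReal_ofReal hp]

theorem condExp_aipw_eq_of_indep [IsProbabilityMeasure μ] {a A B : Ω → ℝ} (hm : m ≤ mΩ)
    (hZ : Measurable Z) (hZval : ∀ ω, Z ω = 0 ∨ Z ω = 1) (hp : p ∈ Set.Ioo (0 : ℝ) 1)
    (hZp : μ {ω | Z ω = 1} = ENNReal.ofReal p)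
    (hind : Indep (MeasurableSpace.comap Z inferInstance) m μ)
    (ha : StronglyMeasurable[m] a) (hA : StronglyMeasurable[m] A)
    (hB : StronglyMeasurable[m] B)
    (ha_int : Integrable a μ) (hA_int : Integrable A μ) (hB_int : Integrable B μ) :
    μ[a + (fun ω => Z ω / p) * A - (fun ω => (1 - Z ω) / (1 - p)) * B | m]
      =ᵐ[μ] a + A - B := by
  obtain ⟨hp0, hp1⟩ := hp
  have hZ_int : Integrable Z μ := .of_bound hZ.aestronglyMeasurable 1
    (ae_of_all _ fun ω => by rcases hZval ω with h | h <;> simp [h])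
  have hZ_mean : μ[Z] = p := integral_eq_of_forall_eq_zero_or_eq_one hZ hZval hp0.le hZp
  refine condExp_add_mul_sub_mul_eq_of_indep hZ.comap_le hm hind
    ((comap_measurable Z).div_const p).stronglyMeasurable
    ((measurable_const.sub (comap_measurable Z)).div_const (1 - p)).stronglyMeasurable
    (fun ω => abs_div_le_inv_of_eq_zero_or_eq_one (hZval ω) hp0)
    (fun ω => abs_div_le_inv_of_eq_zero_or_eq_one (by rcases hZval ω with h | h <;> simp [h])
      (sub_pos.2 hp1))
    ?_ ?_ ha hA hB ha_int hA_int hB_int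
  · rw [integral_div, hZ_mean, div_self hp0.ne']
  · rw [integral_div, integral_sub (integrable_const 1) hZ_int, hZ_mean]
    simp [sub_ne_zero.2 hp1.ne']

end BernoulliTreatment

theorem pseudo_outcome_conditionally_unbiased_general
    {Ω 𝒳 : Type*} [MeasurableSpace Ω] [MeasurableSpace 𝒳]
    (P : Measure Ω) [IsProbabilityMeasure P]
    (X : Ω → 𝒳) (Y0 Y1 Z : Ω → ℝ)
    (hX : Measurable X) (hY0 : Measurable Y0) (hY1 : Measurable Y1) (hZ : Measurable Z)
    (hY0int : Integrable Y0 P) (hY1int : Integrable Y1 P)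
    (hZval : ∀ ω, Z ω = 0 ∨ Z ω = 1)
    (p : ℝ) (hp : p ∈ Set.Ioo (0 : ℝ) 1)
    (hZp : P {ω | Z ω = 1} = ENNReal.ofReal p)
    (hindep : IndepFun Z (fun ω => (X ω, Y0 ω, Y1 ω)) P)
    (μ0 μ1 : 𝒳 → ℝ) (hμ0 : Measurable μ0) (hμ1 : Measurable μ1)
    (C0 C1 : ℝ) (hb0 : ∀ x, |μ0 x| ≤ C0) (hb1 : ∀ x, |μ1 x| ≤ C1)
    (Y : Ω → ℝ) (hY : ∀ ω, Y ω = Z ω * Y1 ω + (1 - Z ω) * Y0 ω)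
    (τ : 𝒳 → ℝ)
    (hτ : P[fun ω => Y1 ω - Y0 ω | MeasurableSpace.comap X inferInstance]
        =ᵐ[P] fun ω => τ (X ω))
    (τhat : Ω → ℝ)
    (hτhat : ∀ ω, τhat ω = (μ1 (X ω) - μ0 (X ω))
        + (Y ω - μ1 (X ω)) * Z ω / p - (Y ω - μ0 (X ω)) * (1 - Z ω) / (1 - p)) :
    P[τhat | MeasurableSpace.comap X inferInstance] =ᵐ[P] fun ω => τ (X ω) := by
  set W := fun ω => (X ω, Y0 ω, Y1 ω)
  set mW : MeasurableSpace Ω := MeasurableSpace.comap W inferInstance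
  have hW : Measurable[mW] W := comap_measurable W
  have hX_W : Measurable[mW] X := measurable_fst.comp hW
  have hY0_W : Measurable[mW] Y0 := (measurable_fst.comp measurable_snd).comp hW
  have hY1_W : Measurable[mW] Y1 := (measurable_snd.comp measurable_snd).comp hW
  have hμ₁X : Integrable (fun ω => μ1 (X ω)) P :=
    .of_bound (hμ1.comp hX).aestronglyMeasurable C1 (ae_of_all _ fun ω => hb1 (X ω))
  have hμ₀X : Integrable (fun ω => μ0 (X ω)) P :=
    .of_bound (hμ0.comp hX).aestronglyMeasurable C0 (ae_of_all _ fun ω => hb0 (X ω))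
  have hτhat_eq : τhat = (fun ω => μ1 (X ω) - μ0 (X ω))
      + (fun ω => Z ω / p) * (fun ω => Y1 ω - μ1 (X ω))
      - (fun ω => (1 - Z ω) / (1 - p)) * (fun ω => Y0 ω - μ0 (X ω)) := by
    funext ω
    rw [hτhat, hY, aipw_eq_of_eq_zero_or_eq_one (hZval ω)]
    rfl
  have hcond_W : P[τhat | mW] =ᵐ[P] Y1 - Y0 := by
    rw [hτhat_eq]
    refine (condExp_aipw_eq_of_indep (hX.prodMk (hY0.prodMk hY1)).comap_le hZ hZval hp hZp
      ((IndepFun_iff_Indep _ _ _).mp hindep)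
      ((hμ1.comp hX_W).sub (hμ0.comp hX_W)).stronglyMeasurable
      (hY1_W.sub (hμ1.comp hX_W)).stronglyMeasurable
      (hY0_W.sub (hμ0.comp hX_W)).stronglyMeasurable
      (hμ₁X.sub hμ₀X) (hY1int.sub hμ₁X) (hY0int.sub hμ₀X)).trans (.of_eq ?_)
    funext ω
    simp only [Pi.add_apply, Pi.sub_apply]
    ring
  calc P[τhat | MeasurableSpace.comap X inferInstance]
      =ᵐ[P] P[P[τhat | mW] | MeasurableSpace.comap X inferInstance] :=
        (condExp_condExp_of_le hX_W.comap_le (hX.prodMk (hY0.prodMk hY1)).comap_le).symm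
    _ =ᵐ[P] P[Y1 - Y0 | MeasurableSpace.comap X inferInstance] := condExp_congr_ae hcond_W
    _ =ᵐ[P] fun ω => τ (X ω) := hτ

/-- Conditional unbiasedness of the AIPW pseudo-outcome: for any bounded measurable
regression functions `μ̂₀, μ̂₁`, we have `E[τ̂ | X] = τ(X) = E[Y₁ − Y₀ | X]` almost surely. -/
theorem pseudo_outcome_conditionally_unbiased
    {Ω 𝒳 : Type*} [MeasurableSpace Ω] [MeasurableSpace 𝒳]
    (P : Measure Ω) [IsProbabilityMeasure P]
    (X : Ω → 𝒳) (Y0 Y1 Z : Ω → ℝ)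
    (hX : Measurable X) (hY0 : Measurable Y0) (hY1 : Measurable Y1) (hZ : Measurable Z)
    (hY0int : Integrable Y0 P) (hY1int : Integrable Y1 P)
    (hZval : ∀ ω, Z ω = 0 ∨ Z ω = 1)
    (p : ℝ) (hp : p ∈ Set.Ioo (0 : ℝ) 1)
    (hZp : P {ω | Z ω = 1} = ENNReal.ofReal p)
    (hindep : IndepFun Z (fun ω => (X ω, Y0 ω, Y1 ω)) P)
    (μ0 μ1 : 𝒳 → ℝ) (hμ0 : Measurable μ0) (hμ1 : Measurable μ1)
    (C0 C1 : ℝ) (hb0 : ∀ x, |μ0 x| ≤ C0) (hb1 : ∀ x, |μ1 x| ≤ C1)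
    (Y : Ω → ℝ) (hY : ∀ ω, Y ω = Z ω * Y1 ω + (1 - Z ω) * Y0 ω)
    (τ : 𝒳 → ℝ) (hτm : Measurable τ)
    (hτ : P[fun ω => Y1 ω - Y0 ω | MeasurableSpace.comap X inferInstance]
        =ᵐ[P] fun ω => τ (X ω))
    (τhat : Ω → ℝ)
    (hτhat : ∀ ω, τhat ω = (μ1 (X ω) - μ0 (X ω))
        + (Y ω - μ1 (X ω)) * Z ω / p - (Y ω - μ0 (X ω)) * (1 - Z ω) / (1 - p)) :
    P[τhat | MeasurableSpace.comap X inferInstance] =ᵐ[P] fun ω => τ (X ω) :=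
  pseudo_outcome_conditionally_unbiased_general P X Y0 Y1 Z hX hY0 hY1 hZ hY0int hY1int hZval p hp
    hZp hindep μ0 μ1 hμ0 hμ1 C0 C1 hb0 hb1 Y hY τ hτ τhat hτhat
end

section
/- Suppose Y₀, Y₁ are square-integrable, μ̂₀ and μ̂₁ are bounded measurable functions, Z is independent of (X, Y₀, Y₁) with P(Z = 1) = p ∈ (0,1), and g : 𝒳 → ℝ is any bounded measurable function. Then the cross term vanishes: E[(τ(X) − g(X)) · (τ̂ − τ(X))] = 0, where τ̂ is the pseudo-outcome and τ is the CATE function. -/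
/-!
Condition on the treatment: `Z` is a Bernoulli(p) variable independent of `W = (X, Y₀, Y₁)`, so
`E[Φ(Z, W)] = p E[Φ(1, W)] + (1 - p) E[Φ(0, W)]`. With `h = τ(X) - g(X)`, the inverse-propensity
weights cancel the factors `p` and `1 - p`, the `μ̂` terms cancel, and the cross term becomes
`E[h (Y₁ - Y₀ - τ(X))]`. Since `h` is `σ(X)`-measurable and `τ(X) = E[Y₁ - Y₀ | X]`, this vanishes
by the pull-out and tower properties of conditional expectation.
-/

open MeasureTheory ProbabilityTheory

section
variable {Ω : Type*} [MeasurableSpace Ω] {P : Measure Ω}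

theorem integral_eq_measureReal_of_zero_or_one {Z : Ω → ℝ} (hZ : Measurable Z)
    (hZval : ∀ ω, Z ω = 0 ∨ Z ω = 1) : ∫ ω, Z ω ∂P = P.real {ω | Z ω = 1} := by
  have hs : MeasurableSet {ω | Z ω = 1} := hZ (measurableSet_singleton 1)
  rw [← integral_indicator_one hs]
  congr with ω
  rcases hZval ω with h | h <;> simp [h]

theorem integral_comp_eq_of_indepFun_of_zero_or_one [IsProbabilityMeasure P]
    {β : Type*} [MeasurableSpace β] {Z : Ω → ℝ} {W : Ω → β} {p : ℝ} (hZ : Measurable Z)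
    (hZval : ∀ ω, Z ω = 0 ∨ Z ω = 1) (hZp : P.real {ω | Z ω = 1} = p)
    (hind : IndepFun Z W P) {Φ : ℝ → β → ℝ} (hΦ1 : Measurable (Φ 1)) (hΦ0 : Measurable (Φ 0))
    (hi1 : Integrable (fun ω => Φ 1 (W ω)) P) (hi0 : Integrable (fun ω => Φ 0 (W ω)) P) :
    ∫ ω, Φ (Z ω) (W ω) ∂P = ∫ ω, (p * Φ 1 (W ω) + (1 - p) * Φ 0 (W ω)) ∂P := by
  have hEZ : ∫ ω, Z ω ∂P = p := (integral_eq_measureReal_of_zero_or_one hZ hZval).trans hZp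
  have hZ' : Measurable fun ω => 1 - Z ω := hZ.const_sub 1
  have hZ_le : ∀ᵐ ω ∂P, ‖Z ω‖ ≤ 1 := ae_of_all _ fun ω => by rcases hZval ω with h | h <;> simp [h]
  have hZ'_le : ∀ᵐ ω ∂P, ‖1 - Z ω‖ ≤ 1 :=
    ae_of_all _ fun ω => by rcases hZval ω with h | h <;> simp [h]
  have hEZ' : ∫ ω, (1 - Z ω) ∂P = 1 - p := by
    rw [integral_sub (integrable_const 1) (.of_bound hZ.aestronglyMeasurable 1 hZ_le), hEZ]
    simp
  have h1 : ∫ ω, Z ω * Φ 1 (W ω) ∂P = p * ∫ ω, Φ 1 (W ω) ∂P := by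
    rw [← hEZ]
    exact (hind.comp measurable_id hΦ1).integral_mul_eq_mul_integral hZ.aestronglyMeasurable hi1.1
  have h0 : ∫ ω, (1 - Z ω) * Φ 0 (W ω) ∂P = (1 - p) * ∫ ω, Φ 0 (W ω) ∂P := by
    rw [← hEZ']
    exact (hind.comp (measurable_const.sub measurable_id) hΦ0).integral_mul_eq_mul_integral
      hZ'.aestronglyMeasurable hi0.1
  calc ∫ ω, Φ (Z ω) (W ω) ∂P = ∫ ω, (Z ω * Φ 1 (W ω) + (1 - Z ω) * Φ 0 (W ω)) ∂P := by
        congr with ω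
        rcases hZval ω with h | h <;> simp [h]
    _ = ∫ ω, (p * Φ 1 (W ω) + (1 - p) * Φ 0 (W ω)) ∂P := by
        rw [integral_add (hi1.bdd_mul hZ.aestronglyMeasurable hZ_le)
            (hi0.bdd_mul hZ'.aestronglyMeasurable hZ'_le),
          integral_add (hi1.const_mul p) (hi0.const_mul (1 - p)), h1, h0,
          integral_const_mul, integral_const_mul]

end

theorem integral_mul_sub_condExp_eq_zero {Ω : Type*} {m m0 : MeasurableSpace Ω}
    {P : Measure[m0] Ω} (hm : m ≤ m0) [SigmaFinite (P.trim hm)] {f g : Ω → ℝ}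
    (hf : StronglyMeasurable[m] f) (hfg : Integrable (f * g) P) (hg : Integrable g P) :
    ∫ ω, f ω * (g ω - P[g|m] ω) ∂P = 0 := by
  have hpull : P[f * g|m] =ᵐ[P] f * P[g|m] := condExp_mul_of_stronglyMeasurable_left hf hfg hg
  have hint : Integrable (f * P[g|m]) P := integrable_condExp.congr hpull
  calc ∫ ω, f ω * (g ω - P[g|m] ω) ∂P = ∫ ω, (f * g) ω ∂P - ∫ ω, (f * P[g|m]) ω ∂P := by
        simp_rw [mul_sub]
        exact integral_sub hfg hint
    _ = 0 := by rw [← integral_condExp hm, integral_congr_ae hpull, sub_self]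

theorem cross_term_vanishes_general
    {Ω 𝒳 : Type*} [MeasurableSpace Ω] [MeasurableSpace 𝒳]
    (P : Measure Ω) [IsProbabilityMeasure P]
    (X : Ω → 𝒳) (Y0 Y1 Z : Ω → ℝ)
    (hX : Measurable X) (hZ : Measurable Z)
    (hY0sq : MemLp Y0 2 P) (hY1sq : MemLp Y1 2 P)
    (hZval : ∀ ω, Z ω = 0 ∨ Z ω = 1)
    (p : ℝ) (hp : p ∈ Set.Ioo (0 : ℝ) 1)
    (hZp : P {ω | Z ω = 1} = ENNReal.ofReal p)
    (hindep : IndepFun Z (fun ω => (X ω, Y0 ω, Y1 ω)) P)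
    (μ0 μ1 : 𝒳 → ℝ) (hμ0 : Measurable μ0) (hμ1 : Measurable μ1)
    (C0 C1 : ℝ) (hb0 : ∀ x, |μ0 x| ≤ C0) (hb1 : ∀ x, |μ1 x| ≤ C1)
    (g : 𝒳 → ℝ) (hg : Measurable g) (Cg : ℝ) (hbg : ∀ x, |g x| ≤ Cg)
    (Y : Ω → ℝ) (hY : ∀ ω, Y ω = Z ω * Y1 ω + (1 - Z ω) * Y0 ω)
    (τ : 𝒳 → ℝ) (hτm : Measurable τ)
    (hτ : P[fun ω => Y1 ω - Y0 ω | MeasurableSpace.comap X inferInstance]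
        =ᵐ[P] fun ω => τ (X ω))
    (τhat : Ω → ℝ)
    (hτhat : ∀ ω, τhat ω = (μ1 (X ω) - μ0 (X ω))
        + (Y ω - μ1 (X ω)) * Z ω / p - (Y ω - μ0 (X ω)) * (1 - Z ω) / (1 - p)) :
    ∫ ω, (τ (X ω) - g (X ω)) * (τhat ω - τ (X ω)) ∂P = 0 := by
  obtain ⟨hp0, hp1⟩ := hp
  have hbounded {f : 𝒳 → ℝ} {C : ℝ} (hf : Measurable f) (hC : ∀ x, |f x| ≤ C) :
      MemLp (fun ω => f (X ω)) 2 P :=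
    .of_bound (hf.comp hX).aestronglyMeasurable C (ae_of_all _ fun ω => hC (X ω))
  have hτX : MemLp (fun ω => τ (X ω)) 2 P := ((hY1sq.sub hY0sq).condExp one_le_two).ae_eq hτ
  have hh : MemLp (fun ω => τ (X ω) - g (X ω)) 2 P := hτX.sub (hbounded hg hbg)
  -- `τhat ω = ψ (Z ω) (X ω, Y0 ω, Y1 ω)`
  set ψ : ℝ → 𝒳 × ℝ × ℝ → ℝ := fun z w => (μ1 w.1 - μ0 w.1)
    + z / p * (z * w.2.2 + (1 - z) * w.2.1 - μ1 w.1)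
    - (1 - z) / (1 - p) * (z * w.2.2 + (1 - z) * w.2.1 - μ0 w.1) with hψ
  set Φ : ℝ → 𝒳 × ℝ × ℝ → ℝ := fun z w => (τ w.1 - g w.1) * (ψ z w - τ w.1) with hΦ
  have hΦm (z : ℝ) : Measurable (Φ z) := by fun_prop
  have hΦi (z : ℝ) : Integrable (fun ω => Φ z (X ω, Y0 ω, Y1 ω)) P := by
    have hYz : MemLp (fun ω => z * Y1 ω + (1 - z) * Y0 ω) 2 P :=
      (hY1sq.const_mul z).add (hY0sq.const_mul (1 - z))
    have hμ0X := hbounded hμ0 hb0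
    have hμ1X := hbounded hμ1 hb1
    exact hh.integrable_mul ((((hμ1X.sub hμ0X).add ((hYz.sub hμ1X).const_mul (z / p))).sub
      ((hYz.sub hμ0X).const_mul ((1 - z) / (1 - p)))).sub hτX)
  calc ∫ ω, (τ (X ω) - g (X ω)) * (τhat ω - τ (X ω)) ∂P
      = ∫ ω, Φ (Z ω) (X ω, Y0 ω, Y1 ω) ∂P := by
        congr with ω
        simp only [hΦ, hψ, hτhat, hY]
        ring
    _ = ∫ ω, (τ (X ω) - g (X ω)) * (Y1 ω - Y0 ω
          - P[fun ω => Y1 ω - Y0 ω | MeasurableSpace.comap X inferInstance] ω) ∂P := by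
        rw [integral_comp_eq_of_indepFun_of_zero_or_one hZ hZval
          (by rw [measureReal_def, hZp, ENNReal.toReal_ofReal hp0.le]) hindep
          (hΦm 1) (hΦm 0) (hΦi 1) (hΦi 0)]
        refine integral_congr_ae ?_
        filter_upwards [hτ] with ω hω
        simp only [hΦ, hψ, hω]
        field_simp
        ring
    _ = 0 := integral_mul_sub_condExp_eq_zero hX.comap_le
        ((hτm.sub hg).comp (comap_measurable X)).stronglyMeasurable
        (hh.integrable_mul (hY1sq.sub hY0sq)) ((hY1sq.sub hY0sq).integrable one_le_two)

/-- The cross term in the loss decomposition vanishes: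
`E[(τ(X) − g(X)) (τ̂ − τ(X))] = 0` for any bounded measurable `g`. -/
theorem cross_term_vanishes
    {Ω 𝒳 : Type*} [MeasurableSpace Ω] [MeasurableSpace 𝒳]
    (P : Measure Ω) [IsProbabilityMeasure P]
    (X : Ω → 𝒳) (Y0 Y1 Z : Ω → ℝ)
    (hX : Measurable X) (hY0 : Measurable Y0) (hY1 : Measurable Y1) (hZ : Measurable Z)
    (hY0sq : MemLp Y0 2 P) (hY1sq : MemLp Y1 2 P)
    (hZval : ∀ ω, Z ω = 0 ∨ Z ω = 1)
    (p : ℝ) (hp : p ∈ Set.Ioo (0 : ℝ) 1)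
    (hZp : P {ω | Z ω = 1} = ENNReal.ofReal p)
    (hindep : IndepFun Z (fun ω => (X ω, Y0 ω, Y1 ω)) P)
    (μ0 μ1 : 𝒳 → ℝ) (hμ0 : Measurable μ0) (hμ1 : Measurable μ1)
    (C0 C1 : ℝ) (hb0 : ∀ x, |μ0 x| ≤ C0) (hb1 : ∀ x, |μ1 x| ≤ C1)
    (g : 𝒳 → ℝ) (hg : Measurable g) (Cg : ℝ) (hbg : ∀ x, |g x| ≤ Cg)
    (Y : Ω → ℝ) (hY : ∀ ω, Y ω = Z ω * Y1 ω + (1 - Z ω) * Y0 ω)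
    (τ : 𝒳 → ℝ) (hτm : Measurable τ)
    (hτ : P[fun ω => Y1 ω - Y0 ω | MeasurableSpace.comap X inferInstance]
        =ᵐ[P] fun ω => τ (X ω))
    (τhat : Ω → ℝ)
    (hτhat : ∀ ω, τhat ω = (μ1 (X ω) - μ0 (X ω))
        + (Y ω - μ1 (X ω)) * Z ω / p - (Y ω - μ0 (X ω)) * (1 - Z ω) / (1 - p)) :
    ∫ ω, (τ (X ω) - g (X ω)) * (τhat ω - τ (X ω)) ∂P = 0 :=
  cross_term_vanishes_general P X Y0 Y1 Z hX hZ hY0sq hY1sq hZval p hp hZp hindep μ0 μ1 hμ0 hμ1 C0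
    C1 hb0 hb1 g hg Cg hbg Y hY τ hτm hτ τhat hτhat
end

section
/- Consider a balanced experiment, p = 1/2, and take μ̂₁ ≡ μ̂₀ ≡ μ̂ for a measurable function μ̂ : 𝒳 → ℝ. Then for every sample i with Z_i ∈ {0,1}, observed outcome Y_i, and every real number t, the pointwise identity (Y_i − μ̂(X_i) − (Z_i − 1/2)·t)² = (1/4)·(τ̂_i − t)² holds, where τ̂_i = 2·(Y_i − μ̂(X_i))·(2Z_i − 1) is the pseudo-outcome specialized to p = 1/2 and μ̂₁ = μ̂₀ = μ̂. Consequently, for every weight vector w ∈ ℝ^K, the R-stacking loss R(w) = Σ_{i ∈ S} (Y_i − μ̂(X_i) − (Z_i − 1/2)·Σ_k w_k τ̂_k(X_i))² equals (1/4)·Σ_{i ∈ S} (τ̂_i − Σ_k w_k τ̂_k(X_i))², i.e., in balanced experiments the R-stacking loss is equal, up to the constant scaling 1/4, to the causal stacking loss with μ̂₁ ≡ μ̂₀ ≡ μ̂. -/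
/-- In a balanced experiment (`p = 1/2`) with `μ̂₁ ≡ μ̂₀ ≡ μ̂`, the pointwise identity
`(Yᵢ − μ̂(Xᵢ) − (Zᵢ − 1/2)·t)² = (1/4)·(τ̂ᵢ − t)²` holds where
`τ̂ᵢ = 2 (Yᵢ − μ̂(Xᵢ)) (2 Zᵢ − 1)`, and consequently the R-stacking loss equals
the causal stacking loss up to the constant scaling `1/4`. -/
theorem rstacking_eq_causal_stacking_balanced {𝒳 ι : Type*} (K : ℕ) (S : Finset ι)
    (Xd : ι → 𝒳) (Yd Zd : ι → ℝ)
    (hZ : ∀ i, Zd i = 0 ∨ Zd i = 1)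
    (μhat : 𝒳 → ℝ) (τk : Fin K → 𝒳 → ℝ)
    (τi : ι → ℝ)
    (hτi : ∀ i, τi i = 2 * (Yd i - μhat (Xd i)) * (2 * Zd i - 1)) :
    (∀ i ∈ S, ∀ t : ℝ,
      (Yd i - μhat (Xd i) - (Zd i - 1 / 2) * t) ^ 2 = (1 / 4) * (τi i - t) ^ 2) ∧
    (∀ w : Fin K → ℝ,
      ∑ i ∈ S, (Yd i - μhat (Xd i) - (Zd i - 1 / 2) * ∑ k, w k * τk k (Xd i)) ^ 2
        = (1 / 4) * ∑ i ∈ S, (τi i - ∑ k, w k * τk k (Xd i)) ^ 2) := by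
  have key : ∀ i, ∀ t : ℝ,
      (Yd i - μhat (Xd i) - (Zd i - 1 / 2) * t) ^ 2 = (1 / 4) * (τi i - t) ^ 2 := by
    intro i t
    rw [hτi i]
    rcases hZ i with h | h <;> rw [h] <;> ring
  refine ⟨fun i _ t => key i t, fun w => ?_⟩
  rw [Finset.mul_sum]
  exact Finset.sum_congr rfl fun i _ => key i _
end
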